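/- Every relatively minimal subgroup of a Hausdorff topological group G is a co-key subgroup of G. -/

import Mathlib

open Topology

/-- Subspace topology induced on a subgroup `H` by a topology `t` on `G`. -/
def subTop {G : Type*} [Group G] (t : TopologicalSpace G) (H : Subgroup G) :
    TopologicalSpace H :=
  t.induced ((↑) : H → G)

/-- Quotient topology on the coset space `G ⧸ H` induced by a topology `t` on `G`. -/
def quotTop {G : Type*} [Group G] (t : TopologicalSpace G) (H : Subgroup G) :
    TopologicalSpace (G ⧸ H) :=
  t.coinduced (QuotientGroup.mk : G → G ⧸ H)

/-- `H` is a key subgroup of `(G, γ)`: every coarser Hausdorff group topology `γ₁`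
(`γ ≤ γ₁` in Mathlib's order means `γ₁` is coarser than `γ`) inducing the original
subspace topology on `H` coincides with `γ`. -/
def IsKey {G : Type*} [Group G] (γ : TopologicalSpace G) (H : Subgroup G) : Prop :=
  ∀ γ₁ : TopologicalSpace G, γ ≤ γ₁ → @IsTopologicalGroup G γ₁ _ → @T2Space G γ₁ →
    subTop γ₁ H = subTop γ H → γ₁ = γ

/-- `H` is a co-key subgroup of `(G, γ)`: every coarser Hausdorff group topology `γ₁`
inducing the original quotient topology on `G ⧸ H` coincides with `γ`. -/
def IsCoKey {G : Type*} [Group G] (γ : TopologicalSpace G) (H : Subgroup G) : Prop :=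
  ∀ γ₁ : TopologicalSpace G, γ ≤ γ₁ → @IsTopologicalGroup G γ₁ _ → @T2Space G γ₁ →
    quotTop γ₁ H = quotTop γ H → γ₁ = γ

/-- `H` is relatively minimal in `(G, γ)`: every coarser Hausdorff group topology on `G`
induces the original subspace topology on `H`. -/
def IsRelMin {G : Type*} [Group G] (γ : TopologicalSpace G) (H : Subgroup G) : Prop :=
  ∀ γ₁ : TopologicalSpace G, γ ≤ γ₁ → @IsTopologicalGroup G γ₁ _ → @T2Space G γ₁ →
    subTop γ₁ H = subTop γ H

/-- `H` is co-minimal in `(G, γ)`: every coarser Hausdorff group topology on `G`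
induces the original quotient topology on the coset space `G ⧸ H`. -/
def IsCoMin {G : Type*} [Group G] (γ : TopologicalSpace G) (H : Subgroup G) : Prop :=
  ∀ γ₁ : TopologicalSpace G, γ ≤ γ₁ → @IsTopologicalGroup G γ₁ _ → @T2Space G γ₁ →
    quotTop γ₁ H = quotTop γ H

/-- `(X, γ)` is a minimal topological group: no strictly coarser Hausdorff group topology. -/
def IsMinimalGroup {X : Type*} [Group X] (γ : TopologicalSpace X) : Prop :=
  ∀ γ₁ : TopologicalSpace X, γ ≤ γ₁ → @IsTopologicalGroup X γ₁ _ → @T2Space X γ₁ → γ₁ = γ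

/-!
Merson's lemma: if a coarser group topology `γ₁` agrees with `γ` both on `H` and on `G ⧸ H`,
then `γ₁ = γ`. Given a `γ`-neighbourhood `V * V ⊆ U` of `1`, pick a `γ₁`-open `O` with
`O ∩ H = V ∩ H` and a `γ₁`-open `W ∋ 1` with `W⁻¹ * W ⊆ O`. The saturated set `(W ∩ V) * H`
is `γ₁`-open because the quotient topologies agree, and
`W ∩ (W ∩ V) * H ⊆ V * (O ∩ H) ⊆ V * V ⊆ U`.
Relative minimality of `H` supplies the agreement on `H` for every coarser Hausdorff group
topology, so agreement on `G ⧸ H` already forces equality.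
-/

open Pointwise Filter

section Merson

variable {G : Type*} [Group G]

theorem exists_open_nhds_one_inv_mul_subset [TopologicalSpace G] [IsTopologicalGroup G]
    {O : Set G} (hO : O ∈ 𝓝 (1 : G)) :
    ∃ W : Set G, IsOpen W ∧ (1 : G) ∈ W ∧ W⁻¹ * W ⊆ O := by
  have hcont : ∀ᶠ p : G × G in 𝓝 1 ×ˢ 𝓝 1, p.1⁻¹ * p.2 ∈ O := by
    rw [← nhds_prod_eq]
    exact (continuous_fst.inv.mul continuous_snd).tendsto' (1, 1) 1 (by simp) hO
  obtain ⟨W, hW, hWO⟩ := (eventually_prod_self_iff (r := fun a b => a⁻¹ * b ∈ O)).1 hcont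
  obtain ⟨W', hW'W, hW'o, hW'1⟩ := mem_nhds_iff.1 hW
  refine ⟨W', hW'o, hW'1, ?_⟩
  rintro _ ⟨a, ha, b, hb, rfl⟩
  simpa using hWO _ (hW'W ha) b (hW'W hb)

variable {γ γ₁ : TopologicalSpace G} {H : Subgroup G}

theorem isOpen_mul_subgroup_of_quotTop_eq (hγ : @IsTopologicalGroup G γ _)
    (hq : quotTop γ₁ H = quotTop γ H) {A : Set G} (hA : IsOpen[γ] A) :
    IsOpen[γ₁] (A * H) := by
  rw [← QuotientGroup.preimage_image_mk_eq_mul]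
  change IsOpen[quotTop γ₁ H] _
  rw [hq]
  change IsOpen[γ] _
  rw [QuotientGroup.preimage_image_mk_eq_mul]
  exact @IsOpen.mul_right G γ _ _ _ _ hA

theorem nhds_one_le_of_subTop_eq_of_quotTop_eq (hγ : @IsTopologicalGroup G γ _)
    (hγ₁ : @IsTopologicalGroup G γ₁ _) (hle : γ ≤ γ₁)
    (hs : subTop γ₁ H = subTop γ H) (hq : quotTop γ₁ H = quotTop γ H) :
    @nhds G γ₁ 1 ≤ @nhds G γ 1 := by
  intro U hU
  obtain ⟨V, hVo, hV1, hVU⟩ := @exists_open_nhds_one_mul_subset G γ _ _ U hU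
  obtain ⟨O, hOo, hOV⟩ : ∃ O, IsOpen[γ₁] O ∧ (↑) ⁻¹' O = ((↑) : H → G) ⁻¹' V := by
    rw [← isOpen_induced_iff]
    change IsOpen[subTop γ₁ H] _
    rw [hs]
    exact @isOpen_induced _ _ γ _ _ hVo
  have hO1 : (1 : G) ∈ O := Set.ext_iff.1 hOV (1 : H) |>.2 hV1
  obtain ⟨W, hWo, hW1, hWO⟩ :=
    @exists_open_nhds_one_inv_mul_subset G _ γ₁ hγ₁ O (@IsOpen.mem_nhds G γ₁ _ _ hOo hO1)
  have hWVH : IsOpen[γ₁] ((W ∩ V) * H) :=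
    isOpen_mul_subgroup_of_quotTop_eq hγ hq (@IsOpen.inter G γ _ _ (hle _ hWo) hVo)
  have h1 : (1 : G) ∈ W ∩ ((W ∩ V) * H) := ⟨hW1, 1, ⟨hW1, hV1⟩, 1, H.one_mem, mul_one 1⟩
  refine mem_of_superset (@IsOpen.mem_nhds G γ₁ _ _ (@IsOpen.inter G γ₁ _ _ hWo hWVH) h1) ?_
  rintro _ ⟨hxW, a, ⟨haW, haV⟩, h, hh, rfl⟩
  have hhO : h ∈ O := by simpa using hWO (Set.mul_mem_mul (Set.inv_mem_inv.2 haW) hxW)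
  have hhV : h ∈ V := Set.ext_iff.1 hOV ⟨h, hh⟩ |>.1 hhO
  exact hVU (Set.mul_mem_mul haV hhV)

theorem eq_of_subTop_eq_of_quotTop_eq (hγ : @IsTopologicalGroup G γ _)
    (hγ₁ : @IsTopologicalGroup G γ₁ _) (hle : γ ≤ γ₁)
    (hs : subTop γ₁ H = subTop γ H) (hq : quotTop γ₁ H = quotTop γ H) : γ₁ = γ :=
  hγ₁.ext hγ <| le_antisymm (nhds_one_le_of_subTop_eq_of_quotTop_eq hγ hγ₁ hle hs hq)
    (nhds_mono hle)

end Merson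

theorem isCoKey_of_isRelMin_general {G : Type*} [Group G] (γ : TopologicalSpace G)
    (hγ : @IsTopologicalGroup G γ _)
    (H : Subgroup G) (h : IsRelMin γ H) :
    IsCoKey γ H := fun γ₁ hle hγ₁ hT2₁ hq =>
  eq_of_subTop_eq_of_quotTop_eq hγ hγ₁ hle (h γ₁ hle hγ₁ hT2₁) hq

/-- Every relatively minimal subgroup is a co-key subgroup. -/
theorem isCoKey_of_isRelMin {G : Type*} [Group G] (γ : TopologicalSpace G)
    (hγ : @IsTopologicalGroup G γ _) (hT2 : @T2Space G γ)
    (H : Subgroup G) (h : IsRelMin γ H) :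
    IsCoKey γ H :=
  isCoKey_of_isRelMin_general γ hγ H h
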